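/- arXiv:1304.7997 — 2 statements merged into one kernel-verified Lean document; each statement's English description precedes it below -/
import Mathlib

section
/- In the odd/odd vertex removal game, the first player wins on a finite bipartite graph G if and only if G has an odd number of edges. -/
open scoped Classical

/-- minimal excludant of a set of naturals -/
noncomputable def mexN (s : Set ℕ) : ℕ := sInf {n | n ∉ s}

/-- delete a vertex's incident edges (the vertex becomes isolated) -/
def delVert {V : Type*} (G : SimpleGraph V) (v : V) : SimpleGraph V where
  Adj a b := G.Adj a b ∧ a ≠ v ∧ b ≠ v
  symm := ⟨fun a b h => ⟨h.1.symm, h.2.2, h.2.1⟩⟩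
  loopless := ⟨fun a h => G.irrefl h.1⟩

lemma delVert_le {V : Type*} (G : SimpleGraph V) (v : V) : delVert G v ≤ G := fun _ _ h => h.1

noncomputable def edgeCard {V : Type*} [Fintype V] (G : SimpleGraph V) : ℕ := G.edgeFinset.card

lemma edgeCard_lt {V : Type*} [Fintype V] (G : SimpleGraph V) {v : V} (h : Odd (G.degree v)) :
    edgeCard (delVert G v) < edgeCard G := by
  apply Finset.card_lt_card
  rw [Finset.ssubset_iff_of_subset (SimpleGraph.edgeFinset_subset_edgeFinset.2 (delVert_le G v))]
  obtain ⟨w, hw⟩ := (G.degree_pos_iff_exists_adj v).1 h.pos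
  refine ⟨s(v, w), ?_, ?_⟩
  · simpa [SimpleGraph.mem_edgeFinset] using hw
  · intro hc
    have := SimpleGraph.mem_edgeFinset.1 hc
    rw [SimpleGraph.mem_edgeSet] at this
    exact this.2.1 rfl

noncomputable def grundy {V : Type*} [Fintype V] (G : SimpleGraph V) : ℕ :=
  mexN {n | ∃ v : {v : V // Odd (G.degree v)}, grundy (delVert G v.1) = n}
termination_by edgeCard G
decreasing_by exact edgeCard_lt G v.2

/-- The first player has a winning strategy iff some move leads to a position
where the opponent (to move) loses. -/
noncomputable def FirstWins {V : Type*} [Fintype V] (G : SimpleGraph V) : Prop :=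
  ∃ v : {v : V // Odd (G.degree v)}, ¬ FirstWins (delVert G v.1)
termination_by edgeCard G
decreasing_by exact edgeCard_lt G v.2

/-!
Deleting a vertex of odd degree changes the parity of the number of edges, so every move flips
that parity. In a bipartite graph the degrees on one side sum to the number of edges, so if that
number is odd some vertex has odd degree. Hence the player facing an odd number of edges can
always move, and always leaves an even number; the player facing an even number either cannot
move or leaves an odd number.
-/

namespace SimpleGraph

variable {V : Type*}

theorem delVert_eq_deleteIncidenceSet (G : SimpleGraph V) (v : V) :
    delVert G v = G.deleteIncidenceSet v := by
  ext a b
  rw [deleteIncidenceSet_adj]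
  rfl

variable [Fintype V]

theorem edgeCard_delVert_add_degree (G : SimpleGraph V) (v : V) :
    edgeCard (delVert G v) + G.degree v = edgeCard G := by
  rw [edgeCard, edgeCard, delVert_eq_deleteIncidenceSet]
  convert Nat.sub_add_cancel (G.degree_le_card_edgeFinset v)
  convert G.card_edgeFinset_deleteIncidenceSet v

theorem odd_edgeCard_delVert_iff (G : SimpleGraph V) {v : V} (hv : Odd (G.degree v)) :
    Odd (edgeCard (delVert G v)) ↔ ¬Odd (edgeCard G) := by
  rw [← edgeCard_delVert_add_degree G v, Nat.odd_add, ← Nat.not_odd_iff_even]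
  tauto

theorem IsBipartite.exists_odd_degree {G : SimpleGraph V} (hG : G.IsBipartite)
    (hodd : Odd G.edgeFinset.card) : ∃ v, Odd (G.degree v) := by
  obtain ⟨s, t, hst⟩ := hG.exists_isBipartiteWith
  rw [← Set.coe_toFinset s, ← Set.coe_toFinset t] at hst
  rw [← isBipartiteWith_sum_degrees_eq_card_edges hst] at hodd
  by_contra! h
  simp only [Nat.not_odd_iff_even] at h
  exact Nat.not_even_iff_odd.2 hodd (Finset.even_sum _ fun v _ => h v)

end SimpleGraph

/-- In the odd/odd vertex removal game, the first player wins on a finite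
bipartite graph `G` iff `G` has an odd number of edges. -/
theorem first_player_wins_iff_odd_edges {V : Type*} [Fintype V]
    (G : SimpleGraph V) (hb : G.Colorable 2) :
    FirstWins G ↔ Odd G.edgeFinset.card := by
  have ih (v : {v : V // Odd (G.degree v)}) :
      FirstWins (delVert G v) ↔ ¬Odd (edgeCard G) := by
    rw [first_player_wins_iff_odd_edges _ (hb.mono_left (delVert_le G v)),
      ← SimpleGraph.odd_edgeCard_delVert_iff G v.2]
    rfl
  rw [FirstWins]
  simp only [ih, not_not]
  constructor
  · rintro ⟨-, h⟩
    exact h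
  · intro h
    obtain ⟨v, hv⟩ := SimpleGraph.IsBipartite.exists_odd_degree hb h
    exact ⟨⟨v, hv⟩, h⟩
termination_by edgeCard G
decreasing_by exact edgeCard_lt G v.2
end

section
/- The Grundy value of the odd/odd vertex removal game on the complete bipartite graph K_{n,m} is 1 if both n and m are odd, and 0 otherwise. -/
open scoped Classical

/-!
Play on `K_{S,T}` with `S ⊆ α`, `T ⊆ β`, the other vertices isolated. Deleting a vertex of `S`
leaves `K_{S∖a,T}`, and that vertex has odd degree iff `|T|` is odd; symmetrically for `T`. So a
move flips the parity of one side and is only available when the other side is odd. By induction on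
`|S| + |T|`: if both sides are odd every move leads to a position with an even side, of value `0`,
and a move exists; otherwise every move leads to a position with both sides odd, of value `1`.
-/

open Finset

lemma odd_card_erase_iff {α : Type*} {s : Finset α} {a : α} (ha : a ∈ s) :
    Odd #(s.erase a) ↔ Even #s := by
  rw [card_erase_of_mem ha, Nat.odd_sub (card_pos.2 ⟨a, ha⟩)]
  simp

lemma mexN_eq_zero {s : Set ℕ} (h : 0 ∉ s) : mexN s = 0 :=
  Nat.sInf_eq_zero.2 (Or.inl h)

lemma mexN_eq_one {s : Set ℕ} (h₀ : 0 ∈ s) (h₁ : 1 ∉ s) : mexN s = 1 :=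
  IsLeast.csInf_eq ⟨h₁, fun _ hn => Nat.one_le_iff_ne_zero.2 fun h => hn (h ▸ h₀)⟩

section Game

variable {V : Type*} [Fintype V] (G : SimpleGraph V)

lemma grundy_eq_zero (h : ∀ v, Odd (G.degree v) → grundy (delVert G v) ≠ 0) : grundy G = 0 := by
  rw [grundy]
  exact mexN_eq_zero fun ⟨v, hv⟩ => h v.1 v.2 hv

lemma grundy_eq_one (h₀ : ∃ v, Odd (G.degree v) ∧ grundy (delVert G v) = 0)
    (h₁ : ∀ v, Odd (G.degree v) → grundy (delVert G v) ≠ 1) : grundy G = 1 := by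
  rw [grundy]
  obtain ⟨v, hv, h⟩ := h₀
  exact mexN_eq_one ⟨⟨v, hv⟩, h⟩ fun ⟨v, hv⟩ => h₁ v.1 v.2 hv

end Game

section CompleteBipartiteOn

variable {α β : Type*}

/-- `K_{S,T}` on the full vertex type `α ⊕ β`: vertices outside `S` and `T` stay as isolated
vertices, so that every position reached from `K_{S,T}` is again a graph on `α ⊕ β`. -/
def completeBipartiteOn (S : Finset α) (T : Finset β) : SimpleGraph (α ⊕ β) :=
  SimpleGraph.fromRel fun x y => ∃ a ∈ S, ∃ b ∈ T, x = .inl a ∧ y = .inr b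

@[simp]
lemma completeBipartiteOn_univ [Fintype α] [Fintype β] :
    completeBipartiteOn (univ : Finset α) (univ : Finset β) = completeBipartiteGraph α β := by
  ext (a | b) (a | b) <;> simp [completeBipartiteOn]

variable (S : Finset α) (T : Finset β)

lemma delVert_inl_completeBipartiteOn (a : α) :
    delVert (completeBipartiteOn S T) (.inl a) = completeBipartiteOn (S.erase a) T := by
  ext (a₁ | b₁) (a₂ | b₂) <;> simp [delVert, completeBipartiteOn] <;> tauto

lemma delVert_inr_completeBipartiteOn (b : β) :
    delVert (completeBipartiteOn S T) (.inr b) = completeBipartiteOn S (T.erase b) := by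
  ext (a₁ | b₁) (a₂ | b₂) <;> simp [delVert, completeBipartiteOn] <;> tauto

variable [Fintype α] [Fintype β]

lemma degree_inl_completeBipartiteOn (a : α) :
    (completeBipartiteOn S T).degree (.inl a) = if a ∈ S then #T else 0 := by
  split_ifs with ha
  · rw [← card_map ⟨Sum.inr, Sum.inr_injective⟩, SimpleGraph.degree]
    congr 1
    ext (a' | b) <;> simp only [SimpleGraph.mem_neighborFinset] <;> simp [completeBipartiteOn, ha]
  · rw [SimpleGraph.degree, card_eq_zero]
    ext (a' | b) <;> simp only [SimpleGraph.mem_neighborFinset] <;> simp [completeBipartiteOn, ha]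

lemma degree_inr_completeBipartiteOn (b : β) :
    (completeBipartiteOn S T).degree (.inr b) = if b ∈ T then #S else 0 := by
  split_ifs with hb
  · rw [← card_map ⟨Sum.inl, Sum.inl_injective⟩, SimpleGraph.degree]
    congr 1
    ext (a | b') <;> simp only [SimpleGraph.mem_neighborFinset] <;> simp [completeBipartiteOn, hb]
  · rw [SimpleGraph.degree, card_eq_zero]
    ext (a | b') <;> simp only [SimpleGraph.mem_neighborFinset] <;> simp [completeBipartiteOn, hb]

variable {S T}

lemma odd_degree_inl_completeBipartiteOn {a : α} :
    Odd ((completeBipartiteOn S T).degree (.inl a)) ↔ a ∈ S ∧ Odd #T := by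
  rw [degree_inl_completeBipartiteOn]
  split_ifs <;> simp [*]

lemma odd_degree_inr_completeBipartiteOn {b : β} :
    Odd ((completeBipartiteOn S T).degree (.inr b)) ↔ b ∈ T ∧ Odd #S := by
  rw [degree_inr_completeBipartiteOn]
  split_ifs <;> simp [*]

theorem grundy_completeBipartiteOn (S : Finset α) (T : Finset β) :
    grundy (completeBipartiteOn S T) = if Odd #S ∧ Odd #T then 1 else 0 := by
  have move_left : ∀ a ∈ S, grundy (delVert (completeBipartiteOn S T) (.inl a)) =
      if Even #S ∧ Odd #T then 1 else 0 := fun a ha => by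
    rw [delVert_inl_completeBipartiteOn, grundy_completeBipartiteOn]
    simp only [odd_card_erase_iff ha]
  have move_right : ∀ b ∈ T, grundy (delVert (completeBipartiteOn S T) (.inr b)) =
      if Odd #S ∧ Even #T then 1 else 0 := fun b hb => by
    rw [delVert_inr_completeBipartiteOn, grundy_completeBipartiteOn]
    simp only [odd_card_erase_iff hb]
  split_ifs with h
  · obtain ⟨hS, hT⟩ := h
    apply grundy_eq_one
    · obtain ⟨a, ha⟩ := card_pos.1 hS.pos
      exact ⟨.inl a, odd_degree_inl_completeBipartiteOn.2 ⟨ha, hT⟩, by simp [move_left a ha, hS]⟩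
    · rintro (a | b) hodd
      · simp [move_left a (odd_degree_inl_completeBipartiteOn.1 hodd).1, hS]
      · simp [move_right b (odd_degree_inr_completeBipartiteOn.1 hodd).1, hT]
  · apply grundy_eq_zero
    rintro (a | b) hodd
    · obtain ⟨ha, hT⟩ := odd_degree_inl_completeBipartiteOn.1 hodd
      simp_all [move_left a ha]
    · obtain ⟨hb, hS⟩ := odd_degree_inr_completeBipartiteOn.1 hodd
      simp_all [move_right b hb]
termination_by #S + #T
decreasing_by
  · exact Nat.add_lt_add_right (card_erase_lt_of_mem ha) _
  · exact Nat.add_lt_add_left (card_erase_lt_of_mem hb) _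

end CompleteBipartiteOn

/-- The Grundy value of the odd/odd vertex removal game on the complete
bipartite graph `K_{n,m}` is 1 if both `n` and `m` are odd, and 0 otherwise. -/
theorem grundy_completeBipartite (n m : ℕ) :
    grundy (completeBipartiteGraph (Fin n) (Fin m)) =
      if Odd n ∧ Odd m then 1 else 0 := by
  simpa using grundy_completeBipartiteOn (univ : Finset (Fin n)) (univ : Finset (Fin m))
end
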